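/- Let M be a module over a ring R, graded by real weights, and suppose there exists M₀ ∈ ℤ and a submodule J of M such that for every real r, the filtration piece F_r(M) satisfies F_r(M) ⊆ F_r(J) + F_{M₀}(M), where F_r(J) = F_r(M) ∩ J. If F_{M₀}(M) is finitely generated as an R-module, then M/(M ∩ J) is finitely generated as an R-module. -/
import Mathlib


/-- If `F_r(M) ⊆ (F_r(M) ∩ J) + F_{M₀}(M)` for all `r` and `F_{M₀}(M)` is
finitely generated, then `M/J` is a finitely generated `R`-module. -/
theorem stmt5 {R M : Type*} [CommRing R] [AddCommGroup M] [Module R M]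
    (g : ℝ → Submodule R M) (hg : DirectSum.IsInternal g)
    (J : Submodule R M) (M₀ : ℤ)
    (F : ℝ → Submodule R M) (hF : ∀ r, F r = ⨆ t : ℝ, ⨆ _ : t ≤ r, g t)
    (h : ∀ r : ℝ, F r ≤ (F r ⊓ J) ⊔ F (M₀ : ℝ))
    (hfg : (F (M₀ : ℝ)).FG) :
    Module.Finite R (M ⧸ J) := by
  have htop : (⊤ : Submodule R M) ≤ J ⊔ F (M₀ : ℝ) := by
    rw [← hg.submodule_iSup_eq_top]
    refine iSup_le fun t => ?_
    have h1 : g t ≤ F t := by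
      rw [hF t]; exact le_iSup_of_le t (le_iSup_of_le le_rfl le_rfl)
    refine h1.trans ((h t).trans (sup_le_sup ?_ le_rfl))
    exact inf_le_right
  rw [Module.finite_def]
  have : (⊤ : Submodule R (M ⧸ J)) = Submodule.map J.mkQ (F (M₀ : ℝ)) := by
    have hJ : Submodule.map J.mkQ J = ⊥ := by
      rw [eq_bot_iff]
      rintro x ⟨y, hy, rfl⟩
      simpa [Submodule.Quotient.mk_eq_zero] using hy
    have h2 := congrArg (Submodule.map J.mkQ) (top_le_iff.mp htop).symm
    rw [Submodule.map_sup, hJ, bot_sup_eq, Submodule.map_top, Submodule.range_mkQ] at h2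
    exact h2
  rw [this]
  exact hfg.map _
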